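/- Fix 0 < κ < 1/2 and set t₀ = 1, t_k = ⌊exp(k^{1−κ})⌋ and n_k = t_k − t_{k−1} for k ≥ 1, and θ = κ(1/2 − κ) > 0. Then: (i) n_k k^κ / t_k → 1 − κ as k → ∞; and (ii) ( √(n_k) / (log n_k)^κ ) · ( k^{κ+θ} / √(t_k) ) → √(1−κ) as k → ∞. -/

import Mathlib

open Filter

/-- `t_k = ⌊exp(k^{1-κ})⌋` with `t₀ = 1`. -/
noncomputable def tblock (κ : ℝ) (k : ℕ) : ℕ :=
  if k = 0 then 1 else Nat.floor (Real.exp ((k : ℝ) ^ (1 - κ)))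

/-- `n_k = t_k - t_{k-1}`. -/
noncomputable def nblock (κ : ℝ) (k : ℕ) : ℕ :=
  tblock κ k - tblock κ (k - 1)

/-!
With `E_k = exp (k ^ (1 - κ))` one has `t_k = E_k + O(1)`, so `n_k = E_k - E_{k-1} + O(1)` and
`n_k k^κ / t_k ≈ k^κ (1 - E_{k-1} / E_k)`. This tends to `1 - κ`: the exponent
`k^{1-κ} - (k-1)^{1-κ}` is `(1 - κ) k^{-κ} (1 + o(1))` (a derivative of `y ↦ y ^ (1 - κ)`),
`1 - e^{-d} ~ d` as `d → 0`, and the `O(1)` errors are killed by `k^κ / E_k → 0`.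
For (ii), `log n_k = log (n_k k^κ / t_k) - κ log k + log t_k = k^{1-κ} (1 + o(1))`, and the
product in (ii) is `√(n_k k^κ / t_k) · (k^{1-κ} / log n_k)^κ`.
-/

open Topology Real

theorem HasDerivAt.tendsto_mul_comp {α : Type*} {l : Filter α} {f : ℝ → ℝ} {f' L : ℝ}
    {c u : α → ℝ} (hf : HasDerivAt f f' 0) (hf0 : f 0 = 0) (hu : Tendsto u l (𝓝[≠] 0))
    (hcu : Tendsto (fun x => c x * u x) l (𝓝 L)) :
    Tendsto (fun x => c x * f (u x)) l (𝓝 (L * f')) := by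
  refine (hcu.mul ((hasDerivAt_iff_tendsto_slope.mp hf).comp hu)).congr' ?_
  filter_upwards [hu self_mem_nhdsWithin] with x (hx : u x ≠ 0)
  simp only [Function.comp_apply, slope_def_field, hf0, sub_zero]
  field_simp

theorem tendsto_rpow_mul_sub_rpow_sub_one (κ : ℝ) :
    Tendsto (fun x : ℝ => x ^ κ * (x ^ (1 - κ) - (x - 1) ^ (1 - κ))) atTop (𝓝 (1 - κ)) := by
  have hf : HasDerivAt (fun y : ℝ => 1 - (1 - y) ^ (1 - κ)) (1 - κ) 0 := by
    simpa using (((hasDerivAt_id (0 : ℝ)).const_sub 1).rpow_const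
      (p := 1 - κ) (by norm_num)).const_sub 1
  have hu : Tendsto (fun x : ℝ => x⁻¹) atTop (𝓝[≠] 0) :=
    tendsto_inv_atTop_nhdsGT_zero.mono_right (nhdsGT_le_nhdsNE 0)
  have hcu : Tendsto (fun x : ℝ => x * x⁻¹) atTop (𝓝 1) :=
    tendsto_const_nhds.congr' (by filter_upwards [eventually_ne_atTop 0] with x hx; field_simp)
  refine (one_mul (1 - κ) ▸ hf.tendsto_mul_comp (by simp) hu hcu).congr' ?_
  filter_upwards [eventually_ge_atTop 1] with x hx
  have hx0 : 0 < x := by linarith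
  have hsplit : (x - 1) ^ (1 - κ) = x ^ (1 - κ) * (1 - x⁻¹) ^ (1 - κ) := by
    rw [← mul_rpow hx0.le (by rw [sub_nonneg]; exact inv_le_one_of_one_le₀ hx)]
    congr 1; field_simp
  have hx1 : x ^ κ * x ^ (1 - κ) = x := by rw [← rpow_add hx0]; simp
  rw [hsplit]; linear_combination ((1 - x⁻¹) ^ (1 - κ) - 1) * hx1

theorem tendsto_rpow_div_exp_rpow {κ : ℝ} (hκ : κ < 1) :
    Tendsto (fun x : ℝ => x ^ κ / exp (x ^ (1 - κ))) atTop (𝓝 0) := by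
  have h := (tendsto_rpow_mul_exp_neg_mul_atTop_nhds_zero (κ / (1 - κ)) 1 one_pos).comp
    (tendsto_rpow_atTop (sub_pos.mpr hκ))
  refine h.congr' ?_
  filter_upwards [eventually_gt_atTop 0] with x hx
  simp only [Function.comp_apply, neg_mul, one_mul, exp_neg, div_eq_mul_inv]
  rw [← rpow_mul hx.le]
  congr 2; field_simp [(sub_pos.mpr hκ).ne']

theorem tendsto_rpow_mul_one_sub_exp_div_exp {κ : ℝ} (hκ0 : 0 < κ) (hκ1 : κ < 1) :
    Tendsto (fun x : ℝ => x ^ κ * (1 - exp ((x - 1) ^ (1 - κ)) / exp (x ^ (1 - κ)))) atTop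
      (𝓝 (1 - κ)) := by
  set u : ℝ → ℝ := fun x => x ^ (1 - κ) - (x - 1) ^ (1 - κ)
  have hf : HasDerivAt (fun d : ℝ => 1 - exp (-d)) 1 0 := by
    simpa using ((hasDerivAt_neg (0 : ℝ)).exp).const_sub 1
  have hu0 : Tendsto u atTop (𝓝 0) := by
    have h := (tendsto_rpow_mul_sub_rpow_sub_one κ).mul
      (tendsto_rpow_neg_atTop hκ0)
    rw [mul_zero] at h
    refine h.congr' ?_
    filter_upwards [eventually_gt_atTop 0] with x hx
    rw [mul_comm, ← mul_assoc, ← rpow_add hx]; simp [u]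
  have hu : Tendsto u atTop (𝓝[≠] 0) := by
    refine tendsto_nhdsWithin_iff.mpr ⟨hu0, ?_⟩
    filter_upwards [eventually_ge_atTop 1] with x hx
    exact (sub_pos.mpr (rpow_lt_rpow (by linarith) (by linarith) (by linarith))).ne'
  refine (mul_one (1 - κ) ▸ hf.tendsto_mul_comp (by simp) hu
    (tendsto_rpow_mul_sub_rpow_sub_one κ)).congr' (.of_forall fun x => ?_)
  simp only [u, neg_sub, exp_sub]

section Blocks

variable {κ : ℝ}

theorem tendsto_natCast_rpow_one_sub_atTop (hκ : κ < 1) :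
    Tendsto (fun k : ℕ => (k : ℝ) ^ (1 - κ)) atTop atTop :=
  (tendsto_rpow_atTop (sub_pos.mpr hκ)).comp tendsto_natCast_atTop_atTop

theorem tblock_eq_floor (hκ : κ < 1) (k : ℕ) : tblock κ k = ⌊exp ((k : ℝ) ^ (1 - κ))⌋₊ := by
  rcases eq_or_ne k 0 with rfl | hk
  · simp [tblock, zero_rpow (sub_pos.mpr hκ).ne']
  · simp [tblock, hk]

theorem tblock_mono (hκ : κ < 1) : Monotone (tblock κ) := fun j k hjk => by
  simp only [tblock_eq_floor hκ]
  gcongr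

theorem abs_nblock_sub_le (hκ : κ < 1) (k : ℕ) :
    |(nblock κ k : ℝ) - (exp ((k : ℝ) ^ (1 - κ)) - exp (((k - 1 : ℕ) : ℝ) ^ (1 - κ)))| ≤ 1 := by
  have hfloor (x : ℝ) : exp x - 1 < ⌊exp x⌋₊ ∧ (⌊exp x⌋₊ : ℝ) ≤ exp x :=
    ⟨Nat.sub_one_lt_floor _, Nat.floor_le (exp_pos x).le⟩
  rw [nblock, Nat.cast_sub (tblock_mono hκ (Nat.sub_le k 1)), tblock_eq_floor hκ,
    tblock_eq_floor hκ, abs_le]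
  constructor <;> linarith [hfloor ((k : ℝ) ^ (1 - κ)), hfloor (((k - 1 : ℕ) : ℝ) ^ (1 - κ))]

theorem tendsto_tblock_div_exp (hκ : κ < 1) :
    Tendsto (fun k : ℕ => (tblock κ k : ℝ) / exp ((k : ℝ) ^ (1 - κ))) atTop (𝓝 1) := by
  simp only [tblock_eq_floor hκ]
  exact tendsto_nat_floor_div_atTop.comp <|
    tendsto_exp_atTop.comp (tendsto_natCast_rpow_one_sub_atTop hκ)

theorem tendsto_nblock_mul_rpow_div_tblock (hκ0 : 0 < κ) (hκ1 : κ < 1) :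
    Tendsto (fun k : ℕ => (nblock κ k : ℝ) * (k : ℝ) ^ κ / tblock κ k) atTop (𝓝 (1 - κ)) := by
  set E : ℕ → ℝ := fun k => exp ((k : ℝ) ^ (1 - κ))
  set E' : ℕ → ℝ := fun k => exp (((k - 1 : ℕ) : ℝ) ^ (1 - κ))
  have hmain : Tendsto (fun k : ℕ => (k : ℝ) ^ κ * (1 - E' k / E k)) atTop (𝓝 (1 - κ)) := by
    refine ((tendsto_rpow_mul_one_sub_exp_div_exp hκ0 hκ1).comp
      tendsto_natCast_atTop_atTop).congr' ?_
    filter_upwards [eventually_ge_atTop 1] with k hk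
    simp [E, E', Nat.cast_sub hk]
  have herr : Tendsto (fun k : ℕ => ((nblock κ k : ℝ) - (E k - E' k)) * ((k : ℝ) ^ κ / E k))
      atTop (𝓝 0) := by
    refine squeeze_zero_norm (fun k => ?_)
      ((tendsto_rpow_div_exp_rpow hκ1).comp tendsto_natCast_atTop_atTop)
    have hnonneg : 0 ≤ (k : ℝ) ^ κ / E k := by positivity
    rw [norm_mul, Real.norm_eq_abs, Real.norm_of_nonneg hnonneg]
    exact mul_le_of_le_one_left hnonneg (abs_nblock_sub_le hκ1 k)
  have h := ((hmain.add herr).div (tendsto_tblock_div_exp hκ1) one_ne_zero)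
  rw [add_zero, div_one] at h
  refine h.congr' (.of_forall fun k => ?_)
  have hE : E k ≠ 0 := (exp_pos _).ne'
  rw [Pi.div_apply, ← div_div_div_cancel_right₀ hE]
  simp only [E] at hE ⊢
  field_simp
  ring

theorem one_le_tblock (hκ : κ < 1) (k : ℕ) : 1 ≤ tblock κ k := by
  rw [tblock_eq_floor hκ, Nat.one_le_floor_iff]
  exact one_le_exp (by positivity)

theorem eventually_nblock_pos (hκ0 : 0 < κ) (hκ1 : κ < 1) : ∀ᶠ k : ℕ in atTop, 0 < nblock κ k := by
  filter_upwards [(tendsto_nblock_mul_rpow_div_tblock hκ0 hκ1).eventually_const_lt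
    (sub_pos.mpr hκ1)] with k hk
  refine Nat.pos_of_ne_zero fun h => ?_
  simp [h] at hk

theorem tendsto_log_tblock_div_rpow (hκ : κ < 1) :
    Tendsto (fun k : ℕ => log (tblock κ k) / (k : ℝ) ^ (1 - κ)) atTop (𝓝 1) := by
  have ha := tendsto_natCast_rpow_one_sub_atTop hκ
  have h := (((tendsto_tblock_div_exp hκ).log one_ne_zero).div_atTop ha).const_add 1
  rw [add_zero] at h
  refine h.congr' ?_
  filter_upwards [ha.eventually_gt_atTop 0] with k hk
  have ht : (0 : ℝ) < tblock κ k := by exact_mod_cast one_le_tblock hκ k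
  rw [log_div ht.ne' (exp_pos _).ne', log_exp]
  field_simp
  ring

theorem tendsto_log_nblock_div_rpow (hκ0 : 0 < κ) (hκ1 : κ < 1) :
    Tendsto (fun k : ℕ => log (nblock κ k) / (k : ℝ) ^ (1 - κ)) atTop (𝓝 1) := by
  have ha := tendsto_natCast_rpow_one_sub_atTop hκ1
  have hR := ((tendsto_nblock_mul_rpow_div_tblock hκ0 hκ1).log (sub_pos.mpr hκ1).ne').div_atTop ha
  have hlogk : Tendsto (fun k : ℕ => log k / (k : ℝ) ^ (1 - κ)) atTop (𝓝 0) :=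
    (isLittleO_log_rpow_atTop (sub_pos.mpr hκ1)).tendsto_div_nhds_zero.comp
      tendsto_natCast_atTop_atTop
  have h := (hR.sub (hlogk.const_mul κ)).add (tendsto_log_tblock_div_rpow hκ1)
  rw [mul_zero, sub_zero, zero_add] at h
  refine h.congr' ?_
  filter_upwards [eventually_ge_atTop 1, eventually_nblock_pos hκ0 hκ1] with k hk hn
  have hk0 : (0 : ℝ) < k := by exact_mod_cast hk
  have ht : (0 : ℝ) < tblock κ k := by exact_mod_cast one_le_tblock hκ1 k
  have hn0 : (0 : ℝ) < nblock κ k := by exact_mod_cast hn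
  rw [log_div (by positivity) ht.ne', log_mul hn0.ne' (by positivity), log_rpow hk0]
  ring

theorem tendsto_sqrt_nblock_div_log_rpow_mul (hκ0 : 0 < κ) (hκ1 : κ < 1) :
    Tendsto (fun k : ℕ => (√(nblock κ k : ℝ) / log (nblock κ k) ^ κ) *
      ((k : ℝ) ^ (κ + κ * (1 / 2 - κ)) / √(tblock κ k : ℝ))) atTop (𝓝 √(1 - κ)) := by
  have hlogn := tendsto_log_nblock_div_rpow hκ0 hκ1
  have h := (tendsto_nblock_mul_rpow_div_tblock hκ0 hκ1).sqrt.mul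
    ((hlogn.inv₀ one_ne_zero).rpow_const (Or.inr hκ0.le))
  rw [inv_one, one_rpow, mul_one] at h
  refine h.congr' ?_
  filter_upwards [eventually_ge_atTop 1, hlogn.eventually_const_lt one_pos] with k hk hlog
  have hk0 : (0 : ℝ) < k := by exact_mod_cast hk
  have hL : 0 < log (nblock κ k) := (div_pos_iff_of_pos_right (rpow_pos_of_pos hk0 _)).mp hlog
  have ht : (0 : ℝ) < tblock κ k := by exact_mod_cast one_le_tblock hκ1 k
  have hexp : (k : ℝ) ^ (κ + κ * (1 / 2 - κ)) = √((k : ℝ) ^ κ) * ((k : ℝ) ^ (1 - κ)) ^ κ := by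
    rw [sqrt_eq_rpow, ← rpow_mul hk0.le, ← rpow_mul hk0.le, ← rpow_add hk0]
    ring_nf
  rw [hexp, sqrt_div' _ ht.le, sqrt_mul (Nat.cast_nonneg _), inv_div,
    div_rpow (by positivity) hL.le]
  field_simp

end Blocks

theorem stmt16 (κ : ℝ) (hκ0 : 0 < κ) (hκ : κ < 1 / 2) :
    0 < κ * (1 / 2 - κ) ∧
    Tendsto (fun k : ℕ => (nblock κ k : ℝ) * (k : ℝ) ^ κ / (tblock κ k : ℝ)) atTop
      (nhds (1 - κ)) ∧
    Tendsto (fun k : ℕ =>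
        (Real.sqrt (nblock κ k) / Real.log (nblock κ k) ^ κ) *
          ((k : ℝ) ^ (κ + κ * (1 / 2 - κ)) / Real.sqrt (tblock κ k))) atTop
      (nhds (Real.sqrt (1 - κ))) :=
  ⟨mul_pos hκ0 (by linarith), tendsto_nblock_mul_rpow_div_tblock hκ0 (by linarith),
    tendsto_sqrt_nblock_div_log_rpow_mul hκ0 (by linarith)⟩
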